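/- In a canonical weighted coloured-edge graph G, for every path p from a vertex u to a vertex v there exists a path q from u to v such that ω_c(q) ≤ ω_c(p) for every colour c, no two consecutive edges of q have the same colour, and q has at most as many edges as p. In particular, every minimal path weight from u to v is realized by a path with no two consecutive edges of the same colour. -/

import Mathlib

open Classical

/-- A weighted coloured-edge graph: a directed multigraph with vertex set `V`,
edge type `E` (each edge `e` has an initial vertex `src e` and a terminal vertex
`dst e`, and self-loops are excluded), a strictly positive real weight on each edge,
and a surjective colour function onto the colour set `M`. -/
structure WCEGraph (V : Type) (M : Type) where
  E : Type
  src : E → V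
  dst : E → V
  wt : E → ℝ
  col : E → M
  wt_pos : ∀ e, 0 < wt e
  no_loop : ∀ e, src e ≠ dst e
  col_surj : Function.Surjective col

namespace WCEGraph

variable {V M : Type} (G : WCEGraph V M)

/-- `p` is a path from `u` to `v`: a nonempty finite sequence of edges, each edge's
terminal vertex being the next edge's initial vertex, starting at `u` and ending at `v`. -/
def IsPath (u v : V) (p : List G.E) : Prop :=
  p ≠ [] ∧ (∀ e ∈ p.head?, G.src e = u) ∧ (∀ e ∈ p.getLast?, G.dst e = v) ∧
    p.Chain' (fun a b => G.dst a = G.src b)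

/-- The weight `ω_c(p)` of the path `p` in colour `c`: the sum of the weights of
those edges of `p` having colour `c`. -/
noncomputable def colWeight (c : M) (p : List G.E) : ℝ :=
  (p.map (fun e => if G.col e = c then G.wt e else 0)).sum

/-- The preorder on paths: `p ≤ q` iff the weight of `p` in each colour is at most
that of `q`. -/
def pathLE (p q : List G.E) : Prop :=
  ∀ c : M, G.colWeight c p ≤ G.colWeight c q

/-- `p` is a minimal path from `u` to `v`: every path `q` from `u` to `v` with
`q ≤ p` has the same weight as `p` in every colour. -/
def IsMinimal (u v : V) (p : List G.E) : Prop :=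
  G.IsPath u v p ∧
    ∀ q, G.IsPath u v q → G.pathLE q p → ∀ c : M, G.colWeight c q = G.colWeight c p

end WCEGraph

namespace WCEGraph

/-- A weighted coloured-edge graph is canonical if it is complete in each colour
(for all distinct vertices `x ≠ y` and every colour `c` there is exactly one edge from
`x` to `y` of colour `c`) and satisfies the triangle inequality in each colour
(for all distinct vertices `x, y, z` and colour `c`, the colour-`c` edges `e : x → y`,
`f : y → z`, `g : x → z` satisfy `ω(g) ≤ ω(e) + ω(f)`). -/
def Canonical {V M : Type} (G : WCEGraph V M) : Prop :=
  (∀ x y : V, x ≠ y → ∀ c : M,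
      ∃! e : G.E, G.src e = x ∧ G.dst e = y ∧ G.col e = c) ∧
  (∀ e f g : G.E,
      G.src e ≠ G.dst e → G.src f ≠ G.dst f → G.src e ≠ G.dst f →
      G.dst e = G.src f → G.src g = G.src e → G.dst g = G.dst f →
      G.col e = G.col f → G.col e = G.col g →
      G.wt g ≤ G.wt e + G.wt f)

end WCEGraph

/-!
Whenever two consecutive edges `e : x → y`, `f : y → z` of a path share a colour `c`, they
can be replaced by the colour-`c` edge `x → z` (or dropped altogether if `x = z`). By the
triangle inequality and positivity of weights this does not increase the weight in any colour,
and it shortens the path, so repeating it terminates in a path without monochromatic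
consecutive edges.
-/

namespace WCEGraph

variable {V M : Type} {G : WCEGraph V M} {u v w : V}

variable (G) in
/-- Unlike `IsPath`, the empty walk from `u` to `u` is allowed, which makes walks closed under
concatenation. -/
def IsWalk : V → V → List G.E → Prop
  | u, v, [] => u = v
  | u, v, e :: p => G.src e = u ∧ IsWalk (G.dst e) v p

@[simp]
lemma isWalk_nil : G.IsWalk u v [] ↔ u = v := Iff.rfl

@[simp]
lemma isWalk_cons {e : G.E} {p : List G.E} :
    G.IsWalk u v (e :: p) ↔ G.src e = u ∧ G.IsWalk (G.dst e) v p := Iff.rfl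

lemma isWalk_append {p q : List G.E} :
    G.IsWalk u w (p ++ q) ↔ ∃ v, G.IsWalk u v p ∧ G.IsWalk v w q := by
  induction p generalizing u with
  | nil => simp
  | cons e p ih => simp [ih, and_assoc]

lemma isWalk_dst_iff (e : G.E) (p : List G.E) :
    G.IsWalk (G.dst e) v p ↔
      (∀ x ∈ (e :: p).getLast?, G.dst x = v) ∧
        (e :: p).IsChain (fun a b => G.dst a = G.src b) := by
  induction p generalizing e with
  | nil => simp
  | cons f p ih =>
    rw [isWalk_cons, ih f]
    simp [List.isChain_cons_cons, eq_comm, and_left_comm]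

lemma isPath_iff_isWalk (huv : u ≠ v) {p : List G.E} : G.IsPath u v p ↔ G.IsWalk u v p := by
  cases p with
  | nil => simpa [IsPath] using huv
  | cons e p =>
    refine ⟨fun ⟨_, hu, hw⟩ => ⟨hu e rfl, (isWalk_dst_iff e p).2 hw⟩,
      fun ⟨hu, hw⟩ => ⟨List.cons_ne_nil e p, ?_, (isWalk_dst_iff e p).1 hw⟩⟩
    rintro x ⟨⟩
    exact hu

@[simp]
lemma colWeight_nil (c : M) : G.colWeight c [] = 0 := rfl

@[simp]
lemma colWeight_cons (c : M) (e : G.E) (p : List G.E) :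
    G.colWeight c (e :: p) = (if G.col e = c then G.wt e else 0) + G.colWeight c p := by
  simp [colWeight]

lemma colWeight_append (c : M) (p q : List G.E) :
    G.colWeight c (p ++ q) = G.colWeight c p + G.colWeight c q := by
  simp [colWeight]

lemma colWeight_nonneg (c : M) (p : List G.E) : 0 ≤ G.colWeight c p := by
  induction p with
  | nil => simp
  | cons e p ih =>
    rw [colWeight_cons]
    split_ifs <;> linarith [G.wt_pos e]

lemma colWeight_append_append_le {c : M} (l t : List G.E) {s s' : List G.E}
    (h : G.colWeight c s ≤ G.colWeight c s') :
    G.colWeight c (l ++ s ++ t) ≤ G.colWeight c (l ++ s' ++ t) := by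
  simp only [colWeight_append]
  linarith

lemma Canonical.exists_short_walk_le_of_col_eq (hG : G.Canonical) {e f : G.E}
    (hef : G.dst e = G.src f) (hcol : G.col e = G.col f) :
    ∃ s, G.IsWalk (G.src e) (G.dst f) s ∧ s.length < 2 ∧
      ∀ c, G.colWeight c s ≤ G.colWeight c [e, f] := by
  by_cases hsd : G.src e = G.dst f
  · exact ⟨[], hsd, by simp, fun c => by simpa using G.colWeight_nonneg c [e, f]⟩
  · obtain ⟨g, ⟨hgs, hgd, hgc⟩, -⟩ := hG.1 _ _ hsd (G.col e)
    have htri : G.wt g ≤ G.wt e + G.wt f :=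
      hG.2 e f g (G.no_loop e) (G.no_loop f) hsd hef hgs hgd hcol hgc.symm
    refine ⟨[g], by simp [hgs, hgd], by simp, fun c => ?_⟩
    simp only [colWeight_cons, colWeight_nil, hgc, ← hcol]
    split_ifs <;> linarith [G.wt_pos e]

lemma Canonical.exists_shorter_walk_le (hG : G.Canonical) {p : List G.E}
    (hp : G.IsWalk u v p) (hp_alt : ¬ p.IsChain (fun a b => G.col a ≠ G.col b)) :
    ∃ q, G.IsWalk u v q ∧ (∀ c, G.colWeight c q ≤ G.colWeight c p) ∧
      q.length < p.length := by
  obtain ⟨e, f, l, t, rfl, hcol⟩ :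
      ∃ e f l t, p = l ++ e :: f :: t ∧ G.col e = G.col f := by
    simpa [List.isChain_iff_forall_rel_of_append_cons_cons] using hp_alt
  rw [show l ++ e :: f :: t = l ++ [e, f] ++ t by simp] at hp ⊢
  obtain ⟨y, hp, ht⟩ := isWalk_append.1 hp
  obtain ⟨x, hl, rfl, hef, rfl⟩ : ∃ x, G.IsWalk u x l ∧ G.src e = x ∧ G.src f = G.dst e ∧
      G.dst f = y := by
    simpa using isWalk_append.1 hp
  obtain ⟨s, hs, hlen, hw⟩ := hG.exists_short_walk_le_of_col_eq hef.symm hcol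
  refine ⟨l ++ s ++ t, isWalk_append.2 ⟨_, isWalk_append.2 ⟨_, hl, hs⟩, ht⟩,
    fun c => colWeight_append_append_le l t (hw c), ?_⟩
  simp only [List.length_append, List.length_cons, List.length_nil] at hlen ⊢
  omega

theorem Canonical.exists_alternating_walk_le (hG : G.Canonical) {p : List G.E}
    (hp : G.IsWalk u v p) :
    ∃ q, G.IsWalk u v q ∧ (∀ c, G.colWeight c q ≤ G.colWeight c p) ∧
      q.IsChain (fun a b => G.col a ≠ G.col b) ∧ q.length ≤ p.length := by
  by_cases hp_alt : p.IsChain (fun a b => G.col a ≠ G.col b)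
  · exact ⟨p, hp, fun _ => le_rfl, hp_alt, le_rfl⟩
  · obtain ⟨p', hp', hwp', hlen'⟩ := hG.exists_shorter_walk_le hp hp_alt
    obtain ⟨q, hq, hwq, hq_alt, hlen⟩ := hG.exists_alternating_walk_le hp'
    exact ⟨q, hq, fun c => (hwq c).trans (hwp' c), hq_alt, by omega⟩
termination_by p.length

end WCEGraph

/-- In a canonical weighted coloured-edge graph, every path `p` from a
vertex `u` to another vertex `v` is dominated by a path `q` from `u` to `v` whose weight
in each colour is at most that of `p`, no two consecutive edges of which have the same
colour, and which has at most as many edges as `p`. -/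
theorem canonical_exists_alternating_dominating_path {V M : Type} (G : WCEGraph V M)
    (hG : G.Canonical) (u v : V) (huv : u ≠ v)
    (p : List G.E) (hp : G.IsPath u v p) :
    ∃ q : List G.E, G.IsPath u v q ∧
      (∀ c : M, G.colWeight c q ≤ G.colWeight c p) ∧
      q.Chain' (fun a b => G.col a ≠ G.col b) ∧
      q.length ≤ p.length := by
  simp only [G.isPath_iff_isWalk huv] at hp ⊢
  exact hG.exists_alternating_walk_le hp
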